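/- arXiv:1911.11172 — 5 statements merged into one kernel-verified Lean document; each statement's English description precedes it below -/
import Mathlib

section
/- Let u ∈ S_n be a separable permutation. Set U = {v ∈ S_n : v ≤_R u} and Q = {w ∈ S_n : for all v ∈ U, ℓ(wv) = ℓ(w) + ℓ(v)}. Then the multiplication map Q × U → S_n, (w, v) ↦ wv, is a bijection (and it is length-additive: ℓ(wv) = ℓ(w) + ℓ(v) for all w ∈ Q, v ∈ U). -/
namespace SepPaper

/-- Number of inversions of a permutation of `Fin n`, i.e. its Coxeter length. -/
def invLen {n : ℕ} (w : Equiv.Perm (Fin n)) : ℕ :=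
  (Finset.univ.filter fun p : Fin n × Fin n => p.1 < p.2 ∧ w p.2 < w p.1).card

/-- Right weak order. -/
def leR {n : ℕ} (v u : Equiv.Perm (Fin n)) : Prop :=
  invLen v + invLen (v⁻¹ * u) = invLen u

/-- Left weak order. -/
def leL {n : ℕ} (v u : Equiv.Perm (Fin n)) : Prop :=
  invLen v + invLen (u * v⁻¹) = invLen u

instance {n : ℕ} (v u : Equiv.Perm (Fin n)) : Decidable (leR v u) :=
  inferInstanceAs (Decidable (_ = _))

instance {n : ℕ} (v u : Equiv.Perm (Fin n)) : Decidable (leL v u) :=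
  inferInstanceAs (Decidable (_ = _))

/-- The permutation 3142 (one-indexed) as a permutation of `Fin 4`. -/
def perm3142 : Equiv.Perm (Fin 4) :=
  ⟨![2, 0, 3, 1], ![1, 3, 0, 2], by decide, by decide⟩

/-- The permutation 2413 (one-indexed) as a permutation of `Fin 4`. -/
def perm2413 : Equiv.Perm (Fin 4) :=
  ⟨![1, 3, 0, 2], ![2, 0, 3, 1], by decide, by decide⟩

/-- `w` contains the pattern `σ`. -/
def ContainsPattern {n k : ℕ} (w : Equiv.Perm (Fin n)) (σ : Equiv.Perm (Fin k)) : Prop :=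
  ∃ f : Fin k → Fin n, StrictMono f ∧ ∀ a b : Fin k, σ a < σ b ↔ w (f a) < w (f b)

/-- A permutation is separable if it avoids 3142 and 2413. -/
def Separable {n : ℕ} (w : Equiv.Perm (Fin n)) : Prop :=
  ¬ ContainsPattern w perm3142 ∧ ¬ ContainsPattern w perm2413

/-- The longest element `w₀` of `S_n`, `i ↦ n+1-i` (one-indexed). -/
def w0 (n : ℕ) : Equiv.Perm (Fin n) :=
  ⟨Fin.rev, Fin.rev, Fin.rev_rev, Fin.rev_rev⟩

/-!
`ℓ(wv) = ℓ(w) + ℓ(v)` exactly when no pair `a < b` is inverted both by `w` and by `v⁻¹`, and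
`v ≤_R u` exactly when every pair inverted by `v⁻¹` is inverted by `u⁻¹`. So, writing `I a b` for
`u⁻¹ b < u⁻¹ a`, a factorization `z = w v` with `w ∈ Q`, `v ∈ U` amounts to a permutation `w`
that is increasing on the pairs in `I` while `z⁻¹ ∘ w` is increasing on the pairs outside `I`.

Since `u⁻¹` avoids 2413 and 3142, every set of at least two letters splits into a lower and an
upper block with all crossing pairs in `I` or all outside `I` (the direct/skew sum decomposition
of separable permutations). Along such a split, `w` must send the lower block onto the elements of
its image that are smallest for `<` or for the order pulled back by `z⁻¹`, according to the type
of the split; induction on the blocks gives existence and uniqueness of `w`.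
-/

open Finset

section Length

variable {n : ℕ}

lemma not_lt_iff_lt_of_ne {α : Type*} [LinearOrder α] {a b : α} (h : a ≠ b) : ¬ a < b ↔ b < a :=
  not_lt.trans h.symm.le_iff_lt

lemma card_filter_eq_add_card_filter {α : Type*} [Fintype α] (P R S : α → Prop)
    [DecidablePred P] [DecidablePred R] [DecidablePred S] (h : ∀ a, P a → (¬ R a ↔ S a)) :
    #{a | P a} = #{a | P a ∧ R a} + #{a | P a ∧ S a} := by
  rw [← card_filter_add_card_filter_not (s := {a | P a}) R, filter_filter, filter_filter]
  congr 2
  exact filter_congr fun a _ => and_congr_right (h a)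

lemma invLen_inv (x : Equiv.Perm (Fin n)) : invLen x⁻¹ = invLen x :=
  card_equiv ((x⁻¹.prodCongr x⁻¹).trans (Equiv.prodComm _ _)) fun p => by
    simp [and_comm]

lemma invLen_mul_add_two_mul_card (w v : Equiv.Perm (Fin n)) :
    invLen (w * v) + 2 * #{q : Fin n × Fin n | q.1 < q.2 ∧ w q.2 < w q.1 ∧ v⁻¹ q.2 < v⁻¹ q.1}
      = invLen w + invLen v := by
  -- the inversions of `w * v`, moved along `v`, are the pairs inverted by exactly one of `w`
  -- and `v⁻¹`
  have hwv : invLen (w * v) = #{q : Fin n × Fin n | v⁻¹ q.1 < v⁻¹ q.2 ∧ w q.2 < w q.1} :=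
    card_equiv (v.prodCongr v) fun p => by
      simp only [mem_filter, mem_univ, true_and]
      simp
  have hsplit : #{q : Fin n × Fin n | v⁻¹ q.1 < v⁻¹ q.2 ∧ w q.2 < w q.1}
      = #{q : Fin n × Fin n | q.1 < q.2 ∧ w q.2 < w q.1 ∧ v⁻¹ q.1 < v⁻¹ q.2}
        + #{q : Fin n × Fin n | q.1 < q.2 ∧ v⁻¹ q.2 < v⁻¹ q.1 ∧ w q.1 < w q.2} := by
    rw [card_filter_eq_add_card_filter _ (fun q : Fin n × Fin n => q.1 < q.2) (fun q => q.2 < q.1)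
      fun q hq => not_lt_iff_lt_of_ne fun h => hq.1.ne (congrArg _ h)]
    congr 1
    · exact congrArg card (filter_congr fun q _ => by tauto)
    · exact card_equiv (Equiv.prodComm _ _) fun q => by simp only [mem_filter, mem_univ,
        true_and, Equiv.prodComm_apply, Prod.fst_swap, Prod.snd_swap]; tauto
  have hw := card_filter_eq_add_card_filter (fun q : Fin n × Fin n => q.1 < q.2 ∧ w q.2 < w q.1)
    (fun q => v⁻¹ q.2 < v⁻¹ q.1) (fun q => v⁻¹ q.1 < v⁻¹ q.2) fun q hq =>
      not_lt_iff_lt_of_ne fun h => hq.1.ne' (v⁻¹.injective h)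
  have hv := card_filter_eq_add_card_filter (fun q : Fin n × Fin n => q.1 < q.2 ∧ v⁻¹ q.2 < v⁻¹ q.1)
    (fun q => w q.2 < w q.1) (fun q => w q.1 < w q.2) fun q hq =>
      not_lt_iff_lt_of_ne fun h => hq.1.ne' (w.injective h)
  have hK : #{q : Fin n × Fin n | q.1 < q.2 ∧ v⁻¹ q.2 < v⁻¹ q.1 ∧ w q.2 < w q.1}
      = #{q : Fin n × Fin n | q.1 < q.2 ∧ w q.2 < w q.1 ∧ v⁻¹ q.2 < v⁻¹ q.1} :=
    congrArg card (filter_congr fun q _ => and_congr_right' and_comm)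
  rw [hwv, hsplit, ← invLen_inv v]
  simp only [and_assoc] at hw hv
  unfold invLen
  omega

lemma invLen_mul_eq_add_iff (w v : Equiv.Perm (Fin n)) :
    invLen (w * v) = invLen w + invLen v ↔
      ∀ a b : Fin n, a < b → ¬ (w b < w a ∧ v⁻¹ b < v⁻¹ a) := by
  rw [← invLen_mul_add_two_mul_card w v, left_eq_add, mul_eq_zero, card_eq_zero,
    filter_eq_empty_iff]
  simp

lemma leR_iff (v u : Equiv.Perm (Fin n)) :
    leR v u ↔ ∀ a b : Fin n, a < b → v⁻¹ b < v⁻¹ a → u⁻¹ b < u⁻¹ a := by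
  have hadd := invLen_mul_eq_add_iff v (v⁻¹ * u)
  rw [mul_inv_cancel_left] at hadd
  rw [leR, eq_comm, hadd]
  simp only [mul_inv_rev, inv_inv, Equiv.Perm.mul_apply]
  constructor
  · intro h a b hab hv
    by_contra hu
    have hu' := (not_lt_iff_lt_of_ne (u⁻¹.injective.ne hab.ne')).1 hu
    exact h (v⁻¹ b) (v⁻¹ a) hv ⟨by simpa using hab, by simpa using hu'⟩
  · rintro h a b hab ⟨hv, hu⟩
    have := h (v b) (v a) hv (by simpa using hab)
    exact this.asymm hu

end Length

section Patterns

variable {n : ℕ}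

lemma containsPattern_of_apply_eq {k : ℕ} (w : Equiv.Perm (Fin n)) (σ : Equiv.Perm (Fin k))
    {q g : Fin k → Fin n} (hq : StrictMono q) (hg : StrictMono g) (h : ∀ i, w (q i) = g (σ i)) :
    ContainsPattern w σ :=
  ⟨q, hq, fun a b => by rw [h, h, hg.lt_iff_lt]⟩

lemma strictMono_vec_four {α : Type*} [Preorder α] {a b c d : α} (hab : a < b) (hbc : b < c)
    (hcd : c < d) : StrictMono ![a, b, c, d] :=
  Fin.strictMono_iff_lt_succ.2 fun i => by fin_cases i <;> assumption

end Patterns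

section Splits

variable {α β : Type*} [LinearOrder α] [LinearOrder β]

/-- `p` avoids the patterns 2413 and 3142. -/
def IsSeparableMap (p : α → β) : Prop :=
  ∀ a b c d, a < b → b < c → c < d →
    ¬ (p c < p a ∧ p a < p d ∧ p d < p b) ∧ ¬ (p b < p d ∧ p d < p a ∧ p a < p c)

lemma IsSeparableMap.toDual {p : α → β} (hp : IsSeparableMap p) :
    IsSeparableMap (fun x => OrderDual.toDual (p x)) := fun a b c d hab hbc hcd =>
  ⟨fun h => (hp a b c d hab hbc hcd).2 ⟨h.2.2, h.2.1, h.1⟩,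
    fun h => (hp a b c d hab hbc hcd).1 ⟨h.2.2, h.2.1, h.1⟩⟩

lemma Separable.isSeparableMap_inv {n : ℕ} {u : Equiv.Perm (Fin n)} (hu : Separable u) :
    IsSeparableMap ⇑u⁻¹ := by
  intro a b c d hab hbc hcd
  have hg := strictMono_vec_four hab hbc hcd
  refine ⟨fun ⟨h₁, h₂, h₃⟩ => hu.1 ?_, fun ⟨h₁, h₂, h₃⟩ => hu.2 ?_⟩
  · exact containsPattern_of_apply_eq u perm3142 (strictMono_vec_four h₁ h₂ h₃) hg fun i => by
      fin_cases i <;> simp [perm3142]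
  · exact containsPattern_of_apply_eq u perm2413 (strictMono_vec_four h₁ h₂ h₃) hg fun i => by
      fin_cases i <;> simp [perm2413]

structure IsSplit (A A₁ A₂ : Finset α) : Prop where
  union_eq : A₁ ∪ A₂ = A
  left_nonempty : A₁.Nonempty
  right_nonempty : A₂.Nonempty
  lt : ∀ a ∈ A₁, ∀ b ∈ A₂, a < b

namespace IsSplit

variable {A A₁ A₂ : Finset α}

lemma subset_left (hs : IsSplit A A₁ A₂) : A₁ ⊆ A := hs.union_eq ▸ subset_union_left

lemma subset_right (hs : IsSplit A A₁ A₂) : A₂ ⊆ A := hs.union_eq ▸ subset_union_right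

lemma disjoint (hs : IsSplit A A₁ A₂) : Disjoint A₁ A₂ :=
  disjoint_left.2 fun x h₁ h₂ => (hs.lt x h₁ x h₂).false

lemma card_add (hs : IsSplit A A₁ A₂) : #A₁ + #A₂ = #A := by
  rw [← hs.union_eq, card_union_of_disjoint hs.disjoint]

lemma ssubset_left (hs : IsSplit A A₁ A₂) : A₁ ⊂ A :=
  ssubset_of_subset_of_ne hs.subset_left fun h => by
    have := hs.card_add; have := card_pos.2 hs.right_nonempty; rw [h] at *; omega

lemma ssubset_right (hs : IsSplit A A₁ A₂) : A₂ ⊂ A :=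
  ssubset_of_subset_of_ne hs.subset_right fun h => by
    have := hs.card_add; have := card_pos.2 hs.left_nonempty; rw [h] at *; omega

end IsSplit

variable {p : α → β}

lemma IsSeparableMap.exists_split_insert_of_lt (hp : IsSeparableMap p)
    (hinj : Function.Injective p) {A B C : Finset α} {a x₁ : α} (ha : ∀ x ∈ A, x < a)
    (hBC : IsSplit A B C) (hinc : ∀ b ∈ B, ∀ c ∈ C, p b < p c) (hx₁ : x₁ ∈ B)
    (hx₁a : p a < p x₁) :
    ∃ A₁ A₂, IsSplit (insert a A) A₁ A₂ ∧
      ((∀ x ∈ A₁, ∀ y ∈ A₂, p x < p y) ∨ (∀ x ∈ A₁, ∀ y ∈ A₂, p y < p x)) := by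
  have hBA := hBC.subset_left
  obtain ⟨hun, hBne, hCne, hlt⟩ := hBC
  have hpa : ∀ x ∈ A, ¬ p x < p a → p a < p x := fun x hx =>
    (not_lt_iff_lt_of_ne (hinj.ne (ha x hx).ne)).1
  have hCa : ∀ c ∈ C, p a < p c := fun c hc => hx₁a.trans (hinc x₁ hx₁ c hc)
  set L := B.filter (p · < p a)
  by_cases hLe : L = ∅
  · have hcross : ∀ x ∈ A, ∀ y ∈ ({a} : Finset α), x < y ∧ p y < p x := by
      intro x hx y hy
      rw [mem_singleton.1 hy]
      refine ⟨ha x hx, ?_⟩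
      rcases mem_union.1 (hun ▸ hx) with hxB | hxC
      · exact hpa x hx fun h => filter_eq_empty_iff.1 hLe hxB h
      · exact hCa x hxC
    exact ⟨A, {a}, ⟨by rw [union_comm, ← insert_eq], hBne.mono hBA, singleton_nonempty a,
      fun x hx y hy => (hcross x hx y hy).1⟩, Or.inr fun x hx y hy => (hcross x hx y hy).2⟩
  by_cases hsep : ∀ x ∈ L, ∀ y ∈ B, p a < p y → x < y
  · have hcross : ∀ x ∈ L, ∀ y ∈ insert a (A \ L), x < y ∧ p x < p y := by
      intro x hx y hy
      obtain ⟨hxB, hxa⟩ := mem_filter.1 hx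
      rcases mem_insert.1 hy with rfl | hy
      · exact ⟨ha x (hBA hxB), hxa⟩
      obtain ⟨hyA, hyL⟩ := mem_sdiff.1 hy
      rcases mem_union.1 (hun ▸ hyA) with hyB | hyC
      · have hay : p a < p y := hpa y hyA fun h => hyL (mem_filter.2 ⟨hyB, h⟩)
        exact ⟨hsep x hx y hyB hay, hxa.trans hay⟩
      · exact ⟨hlt x hxB y hyC, hinc x hxB y hyC⟩
    refine ⟨L, insert a (A \ L), ⟨?_, nonempty_iff_ne_empty.2 hLe, insert_nonempty _ _,
      fun x hx y hy => (hcross x hx y hy).1⟩, Or.inl fun x hx y hy => (hcross x hx y hy).2⟩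
    rw [union_insert, union_sdiff_of_subset ((filter_subset _ _).trans hBA)]
  -- otherwise some `y < x < c < a` has `p x < p a < p y < p c`, a 3142 pattern of `p`
  push Not at hsep
  obtain ⟨x, hx, y, hyB, hay, hyx⟩ := hsep
  obtain ⟨hxB, hxa⟩ := mem_filter.1 hx
  have hyx : y < x := lt_of_le_of_ne hyx fun h => (hxa.trans hay).ne (congrArg p h.symm)
  obtain ⟨c, hc⟩ := hCne
  exact (hp y x c a hyx (hlt x hxB c hc) (ha c (hun ▸ mem_union_right _ hc))).2
    ⟨hxa, hay, hinc y hyB c hc⟩ |>.elim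

lemma IsSeparableMap.exists_split_insert (hp : IsSeparableMap p)
    (hinj : Function.Injective p) {A B C : Finset α} {a : α} (ha : ∀ x ∈ A, x < a)
    (hBC : IsSplit A B C) (hinc : ∀ b ∈ B, ∀ c ∈ C, p b < p c) :
    ∃ A₁ A₂, IsSplit (insert a A) A₁ A₂ ∧
      ((∀ x ∈ A₁, ∀ y ∈ A₂, p x < p y) ∨ (∀ x ∈ A₁, ∀ y ∈ A₂, p y < p x)) := by
  by_cases hlow : ∀ x ∈ B, p x < p a
  · obtain ⟨hun, hBne, -, hlt⟩ := hBC
    have hcross : ∀ x ∈ B, ∀ y ∈ insert a C, x < y ∧ p x < p y := by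
      intro x hx y hy
      rcases mem_insert.1 hy with rfl | hy
      · exact ⟨ha x (hun ▸ mem_union_left _ hx), hlow x hx⟩
      · exact ⟨hlt x hx y hy, hinc x hx y hy⟩
    exact ⟨B, insert a C, ⟨by rw [union_insert, hun], hBne, insert_nonempty _ _,
      fun x hx y hy => (hcross x hx y hy).1⟩, Or.inl fun x hx y hy => (hcross x hx y hy).2⟩
  push Not at hlow
  obtain ⟨x₁, hx₁, hx₁a⟩ := hlow
  exact hp.exists_split_insert_of_lt hinj ha hBC hinc hx₁
    (lt_of_le_of_ne hx₁a (hinj.ne (ha x₁ (hBC.subset_left hx₁)).ne'))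

lemma IsSeparableMap.exists_split (hp : IsSeparableMap p) (hinj : Function.Injective p)
    (A : Finset α) (hA : 2 ≤ #A) :
    ∃ A₁ A₂, IsSplit A A₁ A₂ ∧
      ((∀ x ∈ A₁, ∀ y ∈ A₂, p x < p y) ∨ (∀ x ∈ A₁, ∀ y ∈ A₂, p y < p x)) := by
  induction A using Finset.induction_on_max with
  | empty => simp at hA
  | insert a A ha ih =>
    rcases (#A).lt_or_ge 2 with hA' | hA'
    · obtain ⟨x, rfl⟩ : ∃ x, A = {x} := card_eq_one.1 (by have := card_insert_le a A; omega)
      have hxa := ha x (mem_singleton_self x)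
      refine ⟨{x}, {a}, ⟨by rw [union_comm, ← insert_eq], singleton_nonempty x,
        singleton_nonempty a, by simpa⟩, ?_⟩
      rcases lt_or_gt_of_ne (hinj.ne hxa.ne) with h | h
      · exact Or.inl (by simpa)
      · exact Or.inr (by simpa)
    · obtain ⟨B, C, hBC, hinc | hdec⟩ := ih hA'
      · exact hp.exists_split_insert hinj ha hBC hinc
      · obtain ⟨A₁, A₂, hs, h⟩ :=
          hp.toDual.exists_split_insert (OrderDual.toDual.injective.comp hinj) ha hBC hdec
        exact ⟨A₁, A₂, hs, h.symm⟩

end Splits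

section Factorization

variable {α γ δ : Type*} [LinearOrder α] [LinearOrder γ] [LinearOrder δ]

def HasUniformSplits (I : α → α → Prop) : Prop :=
  ∀ A : Finset α, 2 ≤ #A → ∃ A₁ A₂, IsSplit A A₁ A₂ ∧
    ((∀ a ∈ A₁, ∀ b ∈ A₂, I a b) ∨ ∀ a ∈ A₁, ∀ b ∈ A₂, ¬ I a b)

lemma IsSeparableMap.hasUniformSplits {β : Type*} [LinearOrder β] {p : α → β}
    (hp : IsSeparableMap p) (hinj : Function.Injective p) :
    HasUniformSplits fun a b => p b < p a := fun A hA => by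
  obtain ⟨A₁, A₂, hs, hinc | hdec⟩ := hp.exists_split hinj A hA
  · exact ⟨A₁, A₂, hs, Or.inr fun a ha b hb => (hinc a ha b hb).not_gt⟩
  · exact ⟨A₁, A₂, hs, Or.inl hdec⟩

def Respects (I : α → α → Prop) (y : α → γ) (A : Finset α) (f : α → α) : Prop :=
  ∀ a ∈ A, ∀ b ∈ A, a < b → (I a b → f a < f b) ∧ (¬ I a b → y (f a) < y (f b))

variable {I : α → α → Prop} {y : α → γ}

lemma Respects.mono {A A' : Finset α} {f : α → α} (h : Respects I y A f) (hA : A' ⊆ A) :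
    Respects I y A' f := fun a ha b hb => h a (hA ha) b (hA hb)

lemma respects_of_card_le_one {A : Finset α} (hA : #A ≤ 1) (f : α → α) : Respects I y A f :=
  fun a ha b hb hab => absurd (card_le_one.1 hA a ha b hb) hab.ne

lemma exists_subset_card_eq_forall_lt {key : α → δ} (hkey : Function.Injective key)
    (B : Finset α) {k : ℕ} (hk : k ≤ #B) :
    ∃ B₁ ⊆ B, #B₁ = k ∧ ∀ x ∈ B₁, ∀ x' ∈ B \ B₁, key x < key x' := by
  induction k with
  | zero => exact ⟨∅, empty_subset B, card_empty, by simp⟩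
  | succ k ih =>
    obtain ⟨B₁, hB₁, hcard, hlow⟩ := ih (by omega)
    have hne : (B \ B₁).Nonempty := by
      rw [← card_pos, card_sdiff_of_subset hB₁]; omega
    obtain ⟨x₀, hx₀, hmin⟩ := exists_min_image (B \ B₁) key hne
    obtain ⟨hx₀B, hx₀B₁⟩ := mem_sdiff.1 hx₀
    refine ⟨insert x₀ B₁, insert_subset hx₀B hB₁, by rw [card_insert_of_notMem hx₀B₁, hcard],
      fun x hx x' hx' => ?_⟩
    rw [sdiff_insert] at hx'
    rcases mem_insert.1 hx with rfl | hx
    · exact (hmin x' (mem_of_mem_erase hx')).lt_of_ne (hkey.ne (ne_of_mem_erase hx').symm)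
    · exact hlow x hx x' (mem_of_mem_erase hx')

lemma eq_and_eq_of_forall_lt {key : α → δ} {C₁ C₂ D₁ D₂ : Finset α}
    (hCD : C₁ ∪ C₂ = D₁ ∪ D₂) (hcard : #C₁ = #D₁)
    (hC : ∀ x ∈ C₁, ∀ x' ∈ C₂, key x < key x') (hD : ∀ x ∈ D₁, ∀ x' ∈ D₂, key x < key x') :
    C₁ = D₁ ∧ C₂ = D₂ := by
  have h₁ : C₁ = D₁ := by
    by_contra hne
    obtain ⟨x, hxC, hxD⟩ := not_subset.1 fun h => hne (eq_of_subset_of_card_le h hcard.ge)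
    obtain ⟨x', hx'D, hx'C⟩ :=
      not_subset.1 fun h => hne (eq_of_subset_of_card_le h hcard.le).symm
    have hxD₂ : x ∈ D₂ := (mem_union.1 (hCD ▸ mem_union_left C₂ hxC)).resolve_left hxD
    have hx'C₂ : x' ∈ C₂ := (mem_union.1 (hCD.symm ▸ mem_union_left D₂ hx'D)).resolve_left hx'C
    exact (hC x hxC x' hx'C₂).asymm (hD x' hx'D x hxD₂)
  have disj {E₁ E₂ : Finset α} (h : ∀ x ∈ E₁, ∀ x' ∈ E₂, key x < key x') : Disjoint E₁ E₂ :=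
    disjoint_left.2 fun x h₁ h₂ => (h x h₁ x h₂).false
  refine ⟨h₁, ?_⟩
  rw [← union_sdiff_cancel_left (disj hC), hCD, h₁, union_sdiff_cancel_left (disj hD)]

lemma exists_bijOn_respects_of_isSplit {key : α → δ} (hkey : Function.Injective key)
    {A A₁ A₂ B : Finset α} (hs : IsSplit A A₁ A₂)
    (hcross : ∀ a ∈ A₁, ∀ b ∈ A₂, ∀ x x', key x < key x' →
      (I a b → x < x') ∧ (¬ I a b → y x < y x'))
    (h₁ : ∀ B₁ : Finset α, #A₁ = #B₁ → ∃ f, Set.BijOn f A₁ B₁ ∧ Respects I y A₁ f)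
    (h₂ : ∀ B₂ : Finset α, #A₂ = #B₂ → ∃ f, Set.BijOn f A₂ B₂ ∧ Respects I y A₂ f)
    (hAB : #A = #B) : ∃ f, Set.BijOn f A B ∧ Respects I y A f := by
  have hcard := hs.card_add
  obtain ⟨B₁, hB₁, hB₁card, hlow⟩ := exists_subset_card_eq_forall_lt hkey B (k := #A₁) (by omega)
  obtain ⟨f₁, hf₁, hr₁⟩ := h₁ B₁ hB₁card.symm
  obtain ⟨f₂, hf₂, hr₂⟩ := h₂ (B \ B₁) (by rw [card_sdiff_of_subset hB₁]; omega)
  have e₁ : Set.EqOn f₁ (A₁.piecewise f₁ f₂) A₁ := fun x hx => (piecewise_eq_of_mem _ _ _ hx).symm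
  have e₂ : Set.EqOn f₂ (A₁.piecewise f₁ f₂) A₂ := fun x hx =>
    (piecewise_eq_of_notMem _ _ _ (disjoint_right.1 hs.disjoint hx)).symm
  refine ⟨A₁.piecewise f₁ f₂, ?_, fun a ha b hb hab => ?_⟩
  · have hf₁' := hf₁.congr e₁
    have hf₂' := hf₂.congr e₂
    rw [← hs.union_eq, ← union_sdiff_of_subset hB₁, coe_union, coe_union]
    refine hf₁'.union hf₂' ((Set.injOn_union (disjoint_coe.2 hs.disjoint)).2
      ⟨hf₁'.injOn, hf₂'.injOn, fun x hx x' hx' h => ?_⟩)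
    exact (mem_sdiff.1 (hf₂'.mapsTo hx')).2 (h ▸ hf₁'.mapsTo hx)
  rcases mem_union.1 (hs.union_eq ▸ ha) with ha | ha <;>
    rcases mem_union.1 (hs.union_eq ▸ hb) with hb | hb
  · rw [← e₁ ha, ← e₁ hb]; exact hr₁ a ha b hb hab
  · rw [← e₁ ha, ← e₂ hb]
    exact hcross a ha b hb _ _ (hlow _ (hf₁.mapsTo ha) _ (hf₂.mapsTo hb))
  · exact absurd (hs.lt b hb a ha) hab.asymm
  · rw [← e₂ ha, ← e₂ hb]; exact hr₂ a ha b hb hab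

lemma HasUniformSplits.exists_bijOn_respects (hI : HasUniformSplits I)
    (hy : Function.Injective y) (A B : Finset α) (hAB : #A = #B) :
    ∃ f, Set.BijOn f A B ∧ Respects I y A f := by
  induction A using Finset.strongInduction generalizing B with | H A ih =>
  rcases (#A).lt_or_ge 2 with hA | hA
  · refine (show #A = 0 ∨ #A = 1 by omega).elim (fun hA₀ => ?_) fun hA₁ => ?_
    · rw [card_eq_zero.1 hA₀, card_eq_zero.1 (hAB.symm.trans hA₀)]
      exact ⟨id, by simp, respects_of_card_le_one (by simp) id⟩
    · obtain ⟨a, rfl⟩ := card_eq_one.1 hA₁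
      obtain ⟨b, rfl⟩ := card_eq_one.1 (hAB.symm.trans hA₁)
      exact ⟨fun _ => b, by simp [Set.BijOn, Set.InjOn, Set.SurjOn],
        respects_of_card_le_one hA₁.le _⟩
  obtain ⟨A₁, A₂, hs, hIab | hIab⟩ := hI A hA
  · exact exists_bijOn_respects_of_isSplit Function.injective_id hs
      (fun a ha b hb _ _ h => ⟨fun _ => h, fun h' => absurd (hIab a ha b hb) h'⟩)
      (ih A₁ hs.ssubset_left) (ih A₂ hs.ssubset_right) hAB
  · exact exists_bijOn_respects_of_isSplit hy hs
      (fun a ha b hb _ _ h => ⟨fun h' => absurd h' (hIab a ha b hb), fun _ => h⟩)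
      (ih A₁ hs.ssubset_left) (ih A₂ hs.ssubset_right) hAB

lemma eqOn_of_isSplit {key : α → δ} {A A₁ A₂ : Finset α} (hs : IsSplit A A₁ A₂)
    (hcross : ∀ a ∈ A₁, ∀ b ∈ A₂, ∀ x x',
      (I a b → x < x') ∧ (¬ I a b → y x < y x') → key x < key x')
    (h₁ : ∀ f g, Set.InjOn f A₁ → Set.InjOn g A₁ → A₁.image f = A₁.image g →
      Respects I y A₁ f → Respects I y A₁ g → Set.EqOn f g A₁)
    (h₂ : ∀ f g, Set.InjOn f A₂ → Set.InjOn g A₂ → A₂.image f = A₂.image g →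
      Respects I y A₂ f → Respects I y A₂ g → Set.EqOn f g A₂)
    {f g : α → α} (hf : Set.InjOn f A) (hg : Set.InjOn g A) (himg : A.image f = A.image g)
    (hrf : Respects I y A f) (hrg : Respects I y A g) : Set.EqOn f g A := by
  have hlow (h : α → α) (hr : Respects I y A h) :
      ∀ x ∈ A₁.image h, ∀ x' ∈ A₂.image h, key x < key x' := by
    simp only [forall_mem_image]
    exact fun a ha b hb => hcross a ha b hb _ _
      (hr a (hs.subset_left ha) b (hs.subset_right hb) (hs.lt a ha b hb))
  have hcard : #(A₁.image f) = #(A₁.image g) := by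
    rw [card_image_of_injOn (hf.mono (coe_subset.2 hs.subset_left)),
      card_image_of_injOn (hg.mono (coe_subset.2 hs.subset_left))]
  obtain ⟨e₁, e₂⟩ := eq_and_eq_of_forall_lt
    (by rw [← image_union, ← image_union, hs.union_eq, himg]) hcard (hlow f hrf) (hlow g hrg)
  rw [← hs.union_eq, coe_union]
  exact (h₁ f g (hf.mono (coe_subset.2 hs.subset_left)) (hg.mono (coe_subset.2 hs.subset_left))
    e₁ (hrf.mono hs.subset_left) (hrg.mono hs.subset_left)).union
    (h₂ f g (hf.mono (coe_subset.2 hs.subset_right)) (hg.mono (coe_subset.2 hs.subset_right))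
    e₂ (hrf.mono hs.subset_right) (hrg.mono hs.subset_right))

lemma HasUniformSplits.eqOn_of_respects (hI : HasUniformSplits I) (A : Finset α)
    {f g : α → α} (hf : Set.InjOn f A) (hg : Set.InjOn g A) (himg : A.image f = A.image g)
    (hrf : Respects I y A f) (hrg : Respects I y A g) : Set.EqOn f g A := by
  induction A using Finset.strongInduction generalizing f g with | H A ih =>
  rcases (#A).lt_or_ge 2 with hA | hA
  · intro x hx
    obtain ⟨x', hx', e⟩ := mem_image.1 (himg ▸ mem_image_of_mem f hx)
    rw [card_le_one.1 (by omega) x' hx' x hx] at e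
    exact e.symm
  obtain ⟨A₁, A₂, hs, hIab | hIab⟩ := hI A hA
  · exact eqOn_of_isSplit (key := id) hs (fun a ha b hb _ _ h => h.1 (hIab a ha b hb))
      (fun _ _ => ih A₁ hs.ssubset_left) (fun _ _ => ih A₂ hs.ssubset_right) hf hg himg hrf hrg
  · exact eqOn_of_isSplit hs (fun a ha b hb _ _ h => h.2 (hIab a ha b hb))
      (fun _ _ => ih A₁ hs.ssubset_left) (fun _ _ => ih A₂ hs.ssubset_right) hf hg himg hrf hrg

end Factorization

lemma respects_iff_additive_and_leR {n : ℕ} (u w v : Equiv.Perm (Fin n)) :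
    Respects (fun a b => u⁻¹ b < u⁻¹ a) ⇑(w * v)⁻¹ univ ⇑w ↔
      (∀ v', leR v' u → invLen (w * v') = invLen w + invLen v') ∧ leR v u := by
  have hwv : ∀ x, (w * v)⁻¹ (w x) = v⁻¹ x := by simp [mul_inv_rev]
  simp only [Respects, mem_univ, true_implies, hwv, leR_iff, invLen_mul_eq_add_iff]
  constructor
  · intro h
    refine ⟨fun v' hv' a b hab ⟨hw, hv⟩ => ((h a b hab).1 (hv' a b hab hv)).asymm hw,
      fun a b hab hv => ?_⟩
    by_contra hu
    exact ((h a b hab).2 hu).asymm hv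
  · rintro ⟨hQ, hU⟩ a b hab
    constructor
    · intro hu
      exact (not_lt_iff_lt_of_ne (w.injective.ne hab.ne')).1
        fun hw => hQ u (fun _ _ _ => id) a b hab ⟨hw, hu⟩
    · intro hu
      exact (not_lt_iff_lt_of_ne (v⁻¹.injective.ne hab.ne')).1 fun hv => hu (hU a b hab hv)

/-- For `u` a separable permutation, with `U = {v : v ≤_R u}` and
`Q = {w : ∀ v ∈ U, ℓ(wv) = ℓ(w) + ℓ(v)}`, the multiplication map `Q × U → S_n`
is a bijection (and it is length-additive). -/
theorem stmt_0 {n : ℕ} (u : Equiv.Perm (Fin n)) (hu : Separable u)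
    (U : Set (Equiv.Perm (Fin n))) (hU : U = {v | leR v u})
    (Q : Set (Equiv.Perm (Fin n)))
    (hQ : Q = {w | ∀ v ∈ U, invLen (w * v) = invLen w + invLen v}) :
    Function.Bijective (fun p : Q × U => (p.1 : Equiv.Perm (Fin n)) * (p.2 : Equiv.Perm (Fin n))) ∧
    ∀ w ∈ Q, ∀ v ∈ U, invLen (w * v) = invLen w + invLen v := by
  subst hU hQ
  have hI := hu.isSeparableMap_inv.hasUniformSplits (u⁻¹).injective
  refine ⟨⟨?_, fun z => ?_⟩, fun w hw v hv => hw v hv⟩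
  · rintro ⟨⟨w₁, hw₁⟩, v₁, hv₁⟩ ⟨⟨w₂, hw₂⟩, v₂, hv₂⟩ (h : w₁ * v₁ = w₂ * v₂)
    have hr₁ := (respects_iff_additive_and_leR u w₁ v₁).2 ⟨hw₁, hv₁⟩
    have hr₂ := (respects_iff_additive_and_leR u w₂ v₂).2 ⟨hw₂, hv₂⟩
    rw [← h] at hr₂
    obtain rfl : w₁ = w₂ := Equiv.ext fun x => hI.eqOn_of_respects univ w₁.injective.injOn
      w₂.injective.injOn (by simp) hr₁ hr₂ (mem_univ x)
    obtain rfl := mul_left_cancel h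
    rfl
  · obtain ⟨f, hf, hr⟩ := hI.exists_bijOn_respects (y := ⇑z⁻¹) z⁻¹.injective univ univ rfl
    set w := Equiv.ofBijective f (Set.bijOn_univ.1 (by simpa using hf))
    have hz : w * (w⁻¹ * z) = z := mul_inv_cancel_left w z
    obtain ⟨hw, hv⟩ := (respects_iff_additive_and_leR u w (w⁻¹ * z)).1 (by rw [hz]; exact hr)
    exact ⟨⟨⟨w, hw⟩, w⁻¹ * z, hv⟩, hz⟩

end SepPaper
end

section
/- Let X, Y ⊆ S_n be subsets such that the multiplication map X × Y → S_n is a length-additive bijection, and let J ⊆ {1,…,n−1}. Let W_J be the subgroup of S_n generated by the adjacent transpositions s_i = (i, i+1) for i ∈ J. Then the multiplication map (X ∩ W_J) × (Y ∩ W_J) → W_J is a bijection onto W_J and is length-additive (with respect to the length function ℓ of S_n). -/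
namespace SepPaper

/-- The adjacent transpositions `s_i = (i, i+1)` (one-indexed) for `i ∈ J`,
as permutations of `Fin n` (zero-indexed: swapping positions `i-1` and `i`). -/
def adjTranspositions (n : ℕ) (J : Set ℕ) : Set (Equiv.Perm (Fin n)) :=
  {σ | ∃ i ∈ J, ∃ (h1 : i - 1 < n) (h2 : i < n),
    σ = Equiv.swap (⟨i - 1, h1⟩ : Fin n) (⟨i, h2⟩ : Fin n)}

/-!
Compare a permutation `w` with the identity through the pattern of comparisons
`(a, b) ↦ [w a < w b]` on ordered pairs: the Hamming distance between the patterns of `w`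
and `1` is `2 ℓ(w)`, and right multiplication permutes the pairs, hence is an isometry. So
`ℓ(xy) = ℓ(x) + ℓ(y)` says that `y` lies between `xy` and `1` for this distance, and then every
inversion of `y` is an inversion of `xy`. On the other hand `W_J` consists of the permutations
none of whose inversions straddle a cut between positions `k - 1` and `k` with `k ∉ J`. Hence
if `w = xy ∈ W_J` then `y ∈ W_J`, and `x = w y⁻¹ ∈ W_J`.
-/

open Equiv Finset

theorem hammingDist_comp_equiv {ι κ β : Type*} [Fintype ι] [Fintype κ] [DecidableEq β]
    (e : κ ≃ ι) (f g : ι → β) : hammingDist (f ∘ e) (g ∘ e) = hammingDist f g :=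
  card_equiv e (by simp)

theorem eq_or_eq_of_hammingDist_eq_add {ι : Type*} [Fintype ι] {β : ι → Type*}
    [∀ i, DecidableEq (β i)] {f g h : ∀ i, β i}
    (hfgh : hammingDist f h = hammingDist f g + hammingDist g h) (i : ι) :
    f i = g i ∨ g i = h i := by
  classical
  by_contra! hi
  set D : (∀ i, β i) → (∀ i, β i) → Finset ι := fun u v => {j | u j ≠ v j} with hD
  have hsub : D f h ⊆ D f g ∪ D g h := by
    intro j
    simp only [hD, mem_filter, mem_univ, true_and, mem_union]
    contrapose!
    exact fun hj => hj.1.trans hj.2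
  have hinter : (D f g ∩ D g h).Nonempty := ⟨i, by simpa [hD] using hi⟩
  have := card_union_add_card_inter (D f g) (D g h)
  have := card_le_card hsub
  have := hinter.card_pos
  change #(D f h) = #(D f g) + #(D g h) at hfgh
  omega

theorem apply_mem_iff_of_mapsTo {α : Type*} [Finite α] {σ : Perm α} {s : Set α}
    (h : Set.MapsTo σ s s) (a : α) : σ a ∈ s ↔ a ∈ s := by
  have hbij := (s.toFinite.injOn_iff_bijOn_of_mapsTo h).mp σ.injective.injOn
  exact h.mem_iff (hbij.surjOn.mapsTo_compl σ.injective)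

variable {n : ℕ}

def ltPattern (w : Perm (Fin n)) (p : Fin n × Fin n) : Bool :=
  decide (w p.1 < w p.2)

theorem hammingDist_ltPattern_mul_right (u v y : Perm (Fin n)) :
    hammingDist (ltPattern (u * y)) (ltPattern (v * y)) =
      hammingDist (ltPattern u) (ltPattern v) :=
  hammingDist_comp_equiv (y.prodCongr y) (ltPattern u) (ltPattern v)

theorem hammingDist_ltPattern_one (w : Perm (Fin n)) :
    hammingDist (ltPattern w) (ltPattern 1) = 2 * invLen w := by
  let I : Finset (Fin n × Fin n) := {p | p.1 < p.2 ∧ w p.2 < w p.1}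
  let I' : Finset (Fin n × Fin n) := {p | p.2 < p.1 ∧ w p.1 < w p.2}
  have hsplit : ({p | ltPattern w p ≠ ltPattern 1 p} : Finset (Fin n × Fin n)) = I ∪ I' := by
    ext ⟨a, b⟩
    rw [mem_filter, mem_union, mem_filter, mem_filter]
    simp only [ltPattern, mem_univ, true_and, Perm.coe_one, id, ne_eq]
    rcases lt_trichotomy a b with hab | rfl | hab
    · simp [hab, hab.not_gt, (w.injective.ne hab.ne').le_iff_lt]
    · simp
    · simp [hab, hab.not_gt]
  have hdisj : Disjoint I I' := disjoint_filter.2 fun p _ hp hp' => lt_asymm hp.1 hp'.1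
  have hswap : #I' = invLen w := card_equiv (Equiv.prodComm _ _) (by simp [I'])
  rw [hammingDist, hsplit, card_union_of_disjoint hdisj, hswap, invLen, two_mul]

theorem lt_of_invLen_mul_eq_add {x y : Perm (Fin n)}
    (hxy : invLen (x * y) = invLen x + invLen y) {a b : Fin n} (hab : a < b)
    (hy : y b < y a) : (x * y) b < (x * y) a := by
  have hdist : hammingDist (ltPattern (x * y)) (ltPattern 1) =
      hammingDist (ltPattern (x * y)) (ltPattern y) +
        hammingDist (ltPattern y) (ltPattern 1) := by
    have hx := hammingDist_ltPattern_mul_right x 1 y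
    rw [one_mul] at hx
    rw [hx, hammingDist_ltPattern_one, hammingDist_ltPattern_one, hammingDist_ltPattern_one, hxy]
    ring
  rcases eq_or_eq_of_hammingDist_eq_add hdist (a, b) with h | h
  · simp only [ltPattern, decide_eq_decide, hy.not_gt, iff_false, not_lt] at h
    exact h.lt_of_ne ((x * y).injective.ne hab.ne')
  · simp [ltPattern, hab, hy.not_gt] at h

theorem exists_descent_of_ne_one {u : Perm (Fin n)} (hu : u ≠ 1) :
    ∃ p q : Fin n, (p : ℕ) + 1 = q ∧ u q < u p := by
  contrapose! hu
  have hmono : StrictMono u := by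
    cases n with
    | zero => exact fun a => a.elim0
    | succ m =>
      exact Fin.strictMono_iff_lt_succ.2 fun i =>
        (hu _ _ (by simp)).lt_of_ne (u.injective.ne Fin.castSucc_lt_succ.ne)
  exact Perm.ext fun a => hmono.apply_eq

theorem swap_lt_swap_of_lt {p q a b : Fin n} (hpq : (p : ℕ) + 1 = q) (hab : a < b)
    (hne : (a, b) ≠ (p, q)) : swap p q a < swap p q b := by
  simp only [ne_eq, Prod.mk.injEq, Fin.ext_iff] at hne
  rw [Fin.lt_def] at hab ⊢
  simp only [swap_apply_def]
  split_ifs <;> simp only [Fin.ext_iff] at * <;> omega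

theorem invLen_mul_swap_lt {u : Perm (Fin n)} {p q : Fin n} (hpq : (p : ℕ) + 1 = q)
    (hd : u q < u p) : invLen (u * swap p q) < invLen u := by
  rw [invLen, invLen, ← card_map (Equiv.prodCongr (swap p q) (swap p q)).toEmbedding]
  refine card_lt_card ((ssubset_iff_of_subset ?_).2 ⟨(p, q), ?_, ?_⟩)
  · rintro ⟨a, b⟩ hab
    rw [mem_map_equiv, mem_filter] at hab
    simp only [prodCongr_symm, symm_swap, prodCongr_apply, Prod.map_apply, Perm.mul_apply,
      swap_apply_self] at hab
    obtain ⟨-, hlt, hinv⟩ := hab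
    refine mem_filter.2 ⟨mem_univ _, ?_, hinv⟩
    have hne : (swap p q a, swap p q b) ≠ (p, q) := by
      simp only [ne_eq, Prod.mk.injEq, swap_apply_eq_iff, swap_apply_left, swap_apply_right]
      rintro ⟨rfl, rfl⟩
      exact hinv.not_gt hd
    simpa using swap_lt_swap_of_lt hpq hlt hne
  · exact mem_filter.2 ⟨mem_univ _, show p < q from Fin.lt_def.2 (by omega), hd⟩
  · rw [mem_map_equiv, mem_filter]
    simp only [prodCongr_symm, symm_swap, prodCongr_apply, Prod.map_apply, swap_apply_left,
      swap_apply_right, Fin.lt_def]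
    omega

/-- `W_J` as the stabilizer of every initial segment `{0, …, k - 1}` with `k ∉ J`: the positions
`k - 1` and `k` lie in different blocks of `W_J` exactly when `k ∉ J`. -/
def parabolic (n : ℕ) (J : Set ℕ) : Subgroup (Perm (Fin n)) where
  carrier := {u | ∀ k ∉ J, ∀ a : Fin n, (u a : ℕ) < k ↔ (a : ℕ) < k}
  mul_mem' hu hv k hk a := (hu k hk _).trans (hv k hk a)
  one_mem' _ _ _ := Iff.rfl
  inv_mem' {u} hu k hk a := by simpa using (hu k hk (u⁻¹ a)).symm

theorem mem_parabolic_iff {J : Set ℕ} {u : Perm (Fin n)} :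
    u ∈ parabolic n J ↔ ∀ k ∉ J, ∀ a b : Fin n, (a : ℕ) < k → k ≤ b → u a < u b := by
  refine ⟨fun hu k hk a b ha hb => ?_, fun h k hk => ?_⟩
  · have hua := (hu k hk a).2 ha
    have hub := (hu k hk b).not.2 (by omega)
    rw [Fin.lt_def]
    omega
  · let s : Set (Fin n) := {a | (a : ℕ) < k}
    by_cases hc : Set.MapsTo u sᶜ sᶜ
    · exact fun a => not_iff_not.1 (apply_mem_iff_of_mapsTo hc a)
    obtain ⟨b, hb, hub⟩ : ∃ b : Fin n, k ≤ (b : ℕ) ∧ (u b : ℕ) < k := by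
      simpa [Set.MapsTo, s] using hc
    refine apply_mem_iff_of_mapsTo (s := s) (fun a ha => ?_)
    have := Fin.lt_def.1 (h k hk a b ha hb)
    simp only [s, Set.mem_ofPred_eq]
    omega

theorem closure_adjTranspositions_le_parabolic (J : Set ℕ) :
    Subgroup.closure (adjTranspositions n J) ≤ parabolic n J := by
  rw [Subgroup.closure_le]
  rintro _ ⟨i, hi, h₁, h₂, rfl⟩ k hk a
  have hik : i ≠ k := by
    rintro rfl
    exact hk hi
  rw [swap_apply_def]
  split_ifs <;> simp only [Fin.ext_iff] at * <;> omega

theorem mem_closure_adjTranspositions_of_mem_parabolic {J : Set ℕ} {u : Perm (Fin n)}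
    (hu : u ∈ parabolic n J) : u ∈ Subgroup.closure (adjTranspositions n J) := by
  rcases eq_or_ne u 1 with rfl | hne
  · exact one_mem _
  obtain ⟨p, q, hpq, hd⟩ := exists_descent_of_ne_one hne
  have hqJ : (q : ℕ) ∈ J := by
    by_contra hq
    exact (mem_parabolic_iff.1 hu q hq p q (by omega) le_rfl).not_gt hd
  have hs : swap p q ∈ adjTranspositions n J :=
    ⟨q, hqJ, by omega, q.2, by congr; exact Fin.ext (by dsimp only; omega)⟩
  have hus : u * swap p q ∈ Subgroup.closure (adjTranspositions n J) :=
    mem_closure_adjTranspositions_of_mem_parabolic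
      (mul_mem hu (closure_adjTranspositions_le_parabolic J (Subgroup.subset_closure hs)))
  simpa using mul_mem hus (Subgroup.subset_closure hs)
termination_by invLen u
decreasing_by exact invLen_mul_swap_lt hpq hd

theorem closure_adjTranspositions_eq_parabolic (J : Set ℕ) :
    Subgroup.closure (adjTranspositions n J) = parabolic n J :=
  le_antisymm (closure_adjTranspositions_le_parabolic J) fun _ =>
    mem_closure_adjTranspositions_of_mem_parabolic

theorem right_mem_parabolic_of_invLen_mul_eq_add {J : Set ℕ} {x y : Perm (Fin n)}
    (hxy : invLen (x * y) = invLen x + invLen y) (h : x * y ∈ parabolic n J) :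
    y ∈ parabolic n J := by
  refine mem_parabolic_iff.2 fun k hk a b ha hb => ?_
  have hab : a < b := Fin.lt_def.2 (by omega)
  refine (lt_or_gt_of_ne (y.injective.ne hab.ne)).resolve_right fun hy => ?_
  exact (mem_parabolic_iff.1 h k hk a b ha hb).not_gt (lt_of_invLen_mul_eq_add hxy hab hy)

theorem stmt_6_general {n : ℕ} (X Y : Set (Equiv.Perm (Fin n)))
    (hadd : ∀ x ∈ X, ∀ y ∈ Y, invLen (x * y) = invLen x + invLen y)
    (hbij : Function.Bijective
      (fun p : X × Y => (p.1 : Equiv.Perm (Fin n)) * (p.2 : Equiv.Perm (Fin n))))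
    (J : Set ℕ)
    (WJ : Set (Equiv.Perm (Fin n)))
    (hWJ : WJ = ↑(Subgroup.closure (adjTranspositions n J))) :
    (∀ x ∈ X ∩ WJ, ∀ y ∈ Y ∩ WJ, invLen (x * y) = invLen x + invLen y) ∧
    Set.BijOn (fun p : Equiv.Perm (Fin n) × Equiv.Perm (Fin n) => p.1 * p.2)
      ((X ∩ WJ) ×ˢ (Y ∩ WJ)) WJ := by
  rw [closure_adjTranspositions_eq_parabolic] at hWJ
  subst hWJ
  refine ⟨fun x hx y hy => hadd x hx.1 y hy.1, fun p hp => mul_mem hp.1.2 hp.2.2, ?_, ?_⟩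
  · rintro ⟨x₁, y₁⟩ ⟨⟨hx₁, -⟩, hy₁, -⟩ ⟨x₂, y₂⟩ ⟨⟨hx₂, -⟩, hy₂, -⟩ heq
    simpa using hbij.injective (a₁ := (⟨x₁, hx₁⟩, ⟨y₁, hy₁⟩)) (a₂ := (⟨x₂, hx₂⟩, ⟨y₂, hy₂⟩)) heq
  · intro w hw
    obtain ⟨⟨⟨x, hx⟩, ⟨y, hy⟩⟩, rfl⟩ := hbij.surjective w
    have hyJ := right_mem_parabolic_of_invLen_mul_eq_add (hadd x hx y hy) hw
    have hxJ : x ∈ parabolic n J := by simpa using mul_mem hw (inv_mem hyJ)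
    exact ⟨(x, y), ⟨⟨hx, hxJ⟩, hy, hyJ⟩, rfl⟩

/-- a splitting of `S_n` restricts to a splitting of every
parabolic subgroup `W_J`. -/
theorem stmt_6 {n : ℕ} (X Y : Set (Equiv.Perm (Fin n)))
    (hadd : ∀ x ∈ X, ∀ y ∈ Y, invLen (x * y) = invLen x + invLen y)
    (hbij : Function.Bijective
      (fun p : X × Y => (p.1 : Equiv.Perm (Fin n)) * (p.2 : Equiv.Perm (Fin n))))
    (J : Set ℕ) (hJ : ∀ i ∈ J, 1 ≤ i ∧ i ≤ n - 1)
    (WJ : Set (Equiv.Perm (Fin n)))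
    (hWJ : WJ = ↑(Subgroup.closure (adjTranspositions n J))) :
    (∀ x ∈ X ∩ WJ, ∀ y ∈ Y ∩ WJ, invLen (x * y) = invLen x + invLen y) ∧
    Set.BijOn (fun p : Equiv.Perm (Fin n) × Equiv.Perm (Fin n) => p.1 * p.2)
      ((X ∩ WJ) ×ˢ (Y ∩ WJ)) WJ :=
  stmt_6_general X Y hadd hbij J WJ hWJ

end SepPaper
end

section
/- For all nonnegative integers s, t, k, the polynomials [s+t+k]_q! · [k]_q! and [s+k]_q! · [t+k]_q! are congruent modulo q^{k+1}; that is, their coefficients of q^d agree for all 0 ≤ d ≤ k. (Equivalently, the q-multinomial coefficient [s+t+k choose s,t,k]_q is congruent to [s+k choose k]_q · [t+k choose k]_q modulo q^{k+1}.) -/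
namespace SepPaper

/-- The `q`-integer `[m]_q = 1 + q + ⋯ + q^{m-1}` as a polynomial over `ℕ`. -/
noncomputable def qInt (m : ℕ) : Polynomial ℕ :=
  ∑ i ∈ Finset.range m, Polynomial.X ^ i

/-- The `q`-factorial `[m]_q! = [1]_q [2]_q ⋯ [m]_q`. -/
noncomputable def qFact : ℕ → Polynomial ℕ
  | 0 => 1
  | m + 1 => qFact m * qInt (m + 1)

/-- Congruence: coefficients agree in degrees `≤ k`. -/
def Cong (k : ℕ) (p q : Polynomial ℕ) : Prop := ∀ d ≤ k, p.coeff d = q.coeff d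

lemma Cong.refl (k : ℕ) (p : Polynomial ℕ) : Cong k p p := fun _ _ => rfl

lemma Cong.trans {k : ℕ} {p q r : Polynomial ℕ} (h1 : Cong k p q) (h2 : Cong k q r) :
    Cong k p r := fun d hd => (h1 d hd).trans (h2 d hd)

lemma Cong.symm {k : ℕ} {p q : Polynomial ℕ} (h : Cong k p q) : Cong k q p :=
  fun d hd => (h d hd).symm

lemma Cong.mul {k : ℕ} {p p' q q' : Polynomial ℕ} (hp : Cong k p p') (hq : Cong k q q') :
    Cong k (p * q) (p' * q') := by
  intro d hd
  rw [Polynomial.coeff_mul, Polynomial.coeff_mul]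
  apply Finset.sum_congr rfl
  intro x hx
  have hxd := Finset.HasAntidiagonal.mem_antidiagonal.mp hx
  have h1 : x.1 ≤ k := le_trans (le_trans (Nat.le_add_right _ _) hxd.le) hd
  have h2 : x.2 ≤ k := le_trans (le_trans (Nat.le_add_left _ _) hxd.le) hd
  rw [hp x.1 h1, hq x.2 h2]

lemma cong_qInt {k m : ℕ} (hm : k + 1 ≤ m) : Cong k (qInt m) (qInt (k + 1)) := by
  intro d hd
  simp only [qInt, Polynomial.finset_sum_coeff, Polynomial.coeff_X_pow]
  rw [Finset.sum_ite_eq, Finset.sum_ite_eq]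
  have h1 : d ∈ Finset.range m := Finset.mem_range.mpr (lt_of_le_of_lt hd hm)
  have h2 : d ∈ Finset.range (k + 1) := Finset.mem_range.mpr (Nat.lt_succ_of_le hd)
  simp [h1, h2]

lemma cong_qFact (k s : ℕ) : Cong k (qFact (s + k)) (qFact k * (qInt (k + 1)) ^ s) := by
  induction s with
  | zero => simpa using Cong.refl k (qFact k)
  | succ n ih =>
    have : n + 1 + k = (n + k) + 1 := by omega
    rw [this, qFact]
    have h1 : Cong k (qFact (n + k) * qInt (n + k + 1))
        ((qFact k * qInt (k + 1) ^ n) * qInt (k + 1)) :=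
      Cong.mul ih (cong_qInt (by omega))
    refine h1.trans ?_
    rw [mul_assoc, ← pow_succ]
    exact Cong.refl _ _

/-- `[s+t+k]_q! ⬝ [k]_q!` and `[s+k]_q! ⬝ [t+k]_q!` are congruent
modulo `q^{k+1}`, i.e. their coefficients agree in all degrees `d ≤ k`.
(Equivalently, the q-multinomial `[s+t+k choose s,t,k]_q` is congruent to
`[s+k choose k]_q ⬝ [t+k choose k]_q` modulo `q^{k+1}`.) -/
theorem stmt_10 (s t k : ℕ) :
    ∀ d ≤ k, (qFact (s + t + k) * qFact k).coeff d
      = (qFact (s + k) * qFact (t + k)).coeff d := by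
  have h1 : Cong k (qFact (s + t + k) * qFact k)
      ((qFact k * qInt (k + 1) ^ (s + t)) * qFact k) :=
    Cong.mul (cong_qFact k (s + t)) (Cong.refl k _)
  have h2 : Cong k (qFact (s + k) * qFact (t + k))
      ((qFact k * qInt (k + 1) ^ s) * (qFact k * qInt (k + 1) ^ t)) :=
    Cong.mul (cong_qFact k s) (cong_qFact k t)
  have heq : (qFact k * qInt (k + 1) ^ (s + t)) * qFact k
      = (qFact k * qInt (k + 1) ^ s) * (qFact k * qInt (k + 1) ^ t) := by
    ring
  exact (h1.trans (heq ▸ Cong.refl k _)).trans h2.symm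

end SepPaper
end

section
/- Let Γ be a connected finite simple graph with vertex set V, and let 𝒩 be a collection of subsets of V such that: (N1) every J ∈ 𝒩 induces a connected (in particular nonempty) subgraph of Γ; (N2) any two members I, J ∈ 𝒩 satisfy I ⊆ J, or J ⊆ I, or I ∩ J = ∅; (N3) for any k ≥ 2 pairwise disjoint members J₁,…,J_k ∈ 𝒩, the induced subgraph on J₁ ∪ ⋯ ∪ J_k is not connected. If V ∉ 𝒩, then there exists a vertex x ∈ V that is not contained in any member of 𝒩. -/
/-!
If every vertex were covered, the maximal members of `𝒩` would be pairwise disjoint by (N2) and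
would cover `V`. There are at least two of them, since the maximal member through a vertex is not
all of `V`. Their union `V` induces the connected graph `Γ`, contradicting (N3).
-/

namespace SepPaper

section

variable {α : Type*}

theorem exists_maximal_mem_of_mem {𝒩 : Set (Set α)} (h𝒩 : 𝒩.Finite) {J : Set α} (hJ : J ∈ 𝒩)
    {x : α} (hx : x ∈ J) : ∃ M, Maximal (· ∈ 𝒩) M ∧ x ∈ M := by
  obtain ⟨M, hJM, hM⟩ := h𝒩.exists_le_maximal hJ
  exact ⟨M, hM, hJM hx⟩

theorem pairwise_disjoint_maximal_of_nested {𝒩 : Set (Set α)}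
    (hnested : ∀ I ∈ 𝒩, ∀ J ∈ 𝒩, I ⊆ J ∨ J ⊆ I ∨ I ∩ J = ∅) :
    {M | Maximal (· ∈ 𝒩) M}.Pairwise (fun I J => I ∩ J = ∅) := by
  intro I hI J hJ hIJ
  rcases hnested I hI.prop J hJ.prop with hsub | hsub | hdisj
  · exact absurd (hI.eq_of_subset hJ.prop hsub) hIJ
  · exact absurd (hJ.eq_of_subset hI.prop hsub).symm hIJ
  · exact hdisj

end

theorem stmt_13_general {V : Type*} [Fintype V] (G : SimpleGraph V) (hG : G.Connected)
    (𝒩 : Set (Set V))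
    (hN2 : ∀ I ∈ 𝒩, ∀ J ∈ 𝒩, I ⊆ J ∨ J ⊆ I ∨ I ∩ J = ∅)
    (hN3 : ∀ S : Finset (Set V), ↑S ⊆ 𝒩 → 2 ≤ S.card →
      (↑S : Set (Set V)).Pairwise (fun I J => I ∩ J = ∅) →
      ¬ (G.induce (⋃₀ (↑S : Set (Set V)))).Connected)
    (hV : Set.univ ∉ 𝒩) :
    ∃ x : V, ∀ J ∈ 𝒩, x ∉ J := by
  by_contra! hcover
  set S := (Set.toFinite {M | Maximal (· ∈ 𝒩) M}).toFinset
  have hS : (S : Set (Set V)) = {M | Maximal (· ∈ 𝒩) M} := Set.Finite.coe_toFinset _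
  have hmax : ∀ x, ∃ M ∈ S, x ∈ M := fun x => by
    obtain ⟨J, hJ, hx⟩ := hcover x
    simpa [S] using exists_maximal_mem_of_mem (Set.toFinite 𝒩) hJ hx
  have hunion : ⋃₀ (S : Set (Set V)) = Set.univ :=
    Set.eq_univ_of_forall fun x => Set.mem_sUnion.2 (hmax x)
  have hcard : 2 ≤ S.card := by
    obtain ⟨x⟩ := hG.nonempty
    obtain ⟨M, hM, -⟩ := hmax x
    have hM𝒩 : M ∈ 𝒩 := by simp only [S, Set.Finite.mem_toFinset] at hM; exact hM.prop
    obtain ⟨y, hyM⟩ := (Set.ne_univ_iff_exists_notMem M).1 fun h => hV (h ▸ hM𝒩)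
    obtain ⟨M', hM', hyM'⟩ := hmax y
    exact Finset.one_lt_card.2 ⟨M, hM, M', hM', fun h => hyM (h ▸ hyM')⟩
  refine hN3 S (hS ▸ fun M hM => hM.prop) hcard (hS ▸ pairwise_disjoint_maximal_of_nested hN2) ?_
  rw [hunion]
  exact (SimpleGraph.induceUnivIso G).connected_iff.mpr hG

/-- if `𝒩` is a nested set on a connected finite simple graph `G`
(conditions (N1), (N2), (N3)) and the full vertex set is not a member of `𝒩`,
then some vertex lies in no member of `𝒩`. -/
theorem stmt_13 {V : Type*} [Fintype V] (G : SimpleGraph V) (hG : G.Connected)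
    (𝒩 : Set (Set V))
    (hN1 : ∀ J ∈ 𝒩, (G.induce J).Connected)
    (hN2 : ∀ I ∈ 𝒩, ∀ J ∈ 𝒩, I ⊆ J ∨ J ⊆ I ∨ I ∩ J = ∅)
    (hN3 : ∀ S : Finset (Set V), ↑S ⊆ 𝒩 → 2 ≤ S.card →
      (↑S : Set (Set V)).Pairwise (fun I J => I ∩ J = ∅) →
      ¬ (G.induce (⋃₀ (↑S : Set (Set V)))).Connected)
    (hV : Set.univ ∉ 𝒩) :
    ∃ x : V, ∀ J ∈ 𝒩, x ∉ J :=
  stmt_13_general G hG 𝒩 hN2 hN3 hV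

end SepPaper
end

section
/- Let n ≥ 2 and let 𝒩 be a nested set on the path graph P with vertex set {1,…,n−1}. Then for every monotonic ordering J₁, J₂, …, J_r of the members of 𝒩 (meaning each member appears after every member strictly containing it), the product w₀(J₁)·w₀(J₂)⋯w₀(J_r) ∈ S_n is a separable permutation, i.e., it avoids the patterns 3142 and 2413. -/
/-! Induct on the list, writing the product as `v * w₀(J)` with `J` the last member; right
multiplication by `w₀(J)` reverses the block of positions of `J`. Every earlier member contains
`J` or is disjoint from it, and disjoint members are never adjacent, so their position blocks
are disjoint too. Hence each earlier block reversal maps the block of `J` onto an interval, and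
the values of `v` on that block form an interval. An occurrence of 3142 or 2413 in
`v * w₀(J)` meets the block in consecutive pattern entries with consecutive values; undoing
the reversal on those entries gives an occurrence in `v` of the pattern with that interval
block reversed, which is again 3142 or 2413, since both are simple and each is the reverse of
the other. -/

namespace SepPaper

/-- The underlying function of the block reversal `w₀(J)`: in one-indexed terms,
for the block of positions `a, a+1, …, b+1` it sends `i ↦ a + b + 1 - i`, and is
the identity elsewhere (here `p` is a zero-indexed position, i.e. `i = p + 1`). -/
def revBlockFun (n a b : ℕ) (p : Fin n) : Fin n :=
  if h : 1 ≤ a ∧ a - 1 ≤ (p : ℕ) ∧ (p : ℕ) ≤ b ∧ b < n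
  then ⟨a + b - 1 - (p : ℕ), by omega⟩ else p

lemma revBlockFun_involutive (n a b : ℕ) : Function.Involutive (revBlockFun n a b) := by
  intro p
  unfold revBlockFun
  by_cases h : 1 ≤ a ∧ a - 1 ≤ (p : ℕ) ∧ (p : ℕ) ≤ b ∧ b < n
  · rw [dif_pos h]
    have h2 : 1 ≤ a ∧ a - 1 ≤ ((⟨a + b - 1 - (p : ℕ), by omega⟩ : Fin n) : ℕ) ∧
        ((⟨a + b - 1 - (p : ℕ), by omega⟩ : Fin n) : ℕ) ≤ b ∧ b < n := by
      simp only [Fin.val_mk]; omega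
    rw [dif_pos h2]
    apply Fin.ext
    simp only [Fin.val_mk]
    omega
  · rw [dif_neg h, dif_neg h]

/-- The permutation `w₀(J) ∈ S_n` for an interval `J = {a, …, b} ⊆ {1, …, n-1}`:
it reverses the block of (one-indexed) positions `a, …, b+1` via
`i ↦ a + b + 1 - i`, and fixes everything else. -/
noncomputable def w0J (n : ℕ) (J : Finset ℕ) : Equiv.Perm (Fin n) :=
  Function.Involutive.toPerm _
    (revBlockFun_involutive n (sInf (↑J : Set ℕ)) (sSup (↑J : Set ℕ)))

/-- `S` is an "interval" of integers: closed under betweenness.  For nonempty sets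
this is exactly connectivity of the induced subgraph of the path graph. -/
def IsIntervalSet (S : Set ℕ) : Prop :=
  ∀ i ∈ S, ∀ j ∈ S, ∀ m : ℕ, i ≤ m → m ≤ j → m ∈ S

/-- A nested set on the path graph with vertex set `{1, …, n-1}`:
(N1) each member is a nonempty interval of consecutive integers in `{1, …, n-1}`
(i.e. induces a connected subgraph of the path);
(N2) any two members are nested or disjoint;
(N3) the union of `k ≥ 2` pairwise disjoint members is not an interval
(i.e. induces a disconnected subgraph of the path). -/
def IsNestedSetPath (n : ℕ) (𝒩 : Finset (Finset ℕ)) : Prop :=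
  (∀ J ∈ 𝒩, J.Nonempty ∧ (∀ i ∈ J, 1 ≤ i ∧ i ≤ n - 1) ∧ IsIntervalSet (↑J : Set ℕ)) ∧
  (∀ I ∈ 𝒩, ∀ J ∈ 𝒩, I ⊆ J ∨ J ⊆ I ∨ I ∩ J = ∅) ∧
  (∀ S : Finset (Finset ℕ), S ⊆ 𝒩 → 2 ≤ S.card →
    (↑S : Set (Finset ℕ)).Pairwise (fun I J => I ∩ J = ∅) →
    ¬ IsIntervalSet (⋃ J ∈ (↑S : Set (Finset ℕ)), (↑J : Set ℕ)))

/-- `L` is a monotonic ordering of the members of `𝒩`: it lists each member exactly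
once, and each member appears after every member strictly containing it. -/
def MonotonicOrdering (𝒩 : Finset (Finset ℕ)) (L : List (Finset ℕ)) : Prop :=
  L.Nodup ∧ L.toFinset = 𝒩 ∧
  ∀ i j : Fin L.length, L.get i ⊂ L.get j → (j : ℕ) < (i : ℕ)

open Equiv

section Reversal

variable {α : Type*} [LinearOrder α]

lemma _root_.Set.OrdConnected.forall_lt_of_lt {B : Set α} (hB : B.OrdConnected) {p z : α}
    (hp : p ∈ B) (hz : z ∉ B) (hpz : p < z) : ∀ q ∈ B, q < z := fun _ hq =>
  lt_of_not_ge fun hzq => hz (hB.out hp hq ⟨hpz.le, hzq⟩)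

lemma _root_.Set.OrdConnected.forall_gt_of_gt {B : Set α} (hB : B.OrdConnected) {p z : α}
    (hp : p ∈ B) (hz : z ∉ B) (hzp : z < p) : ∀ q ∈ B, z < q := fun _ hq =>
  lt_of_not_ge fun hqz => hz (hB.out hq hp ⟨hqz, hzp.le⟩)

def NestedOrDisjoint (s t : Set α) : Prop :=
  s ⊆ t ∨ t ⊆ s ∨ Disjoint s t

structure ReversesOn (e : Perm α) (B : Set α) : Prop where
  strictAntiOn : StrictAntiOn e B
  apply_of_notMem : ∀ x ∉ B, e x = x

namespace ReversesOn

variable {e : Perm α} {B I C : Set α}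

lemma apply_mem_iff (he : ReversesOn e B) {x : α} : e x ∈ B ↔ x ∈ B := by
  refine ⟨fun hex => ?_, fun hx => ?_⟩
  · by_contra hx
    rw [he.apply_of_notMem x hx] at hex
    exact hx hex
  · by_contra hex
    have hfix : e x = x := e.injective (he.apply_of_notMem _ hex)
    exact hex (by rwa [hfix])

lemma image_eq (he : ReversesOn e B) (h : B ⊆ I ∨ Disjoint B I) : e '' I = I := by
  have hmem : ∀ x, e x ∈ I ↔ x ∈ I := by
    intro x
    by_cases hx : x ∈ B
    · have hex : e x ∈ B := he.apply_mem_iff.mpr hx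
      rcases h with h | h
      · exact iff_of_true (h hex) (h hx)
      · exact iff_of_false (h.notMem_of_mem_left hex) (h.notMem_of_mem_left hx)
    · rw [he.apply_of_notMem x hx]
  ext y
  rw [Set.mem_image_equiv, ← hmem, Equiv.apply_symm_apply]

lemma image_subset (he : ReversesOn e B) (h : I ⊆ B) : e '' I ⊆ B :=
  Set.image_subset_iff.mpr fun _ hx => he.apply_mem_iff.mpr (h hx)

lemma ordConnected_image_of_subset (he : ReversesOn e B) (hB : B.OrdConnected)
    (hI : I.OrdConnected) (hIB : I ⊆ B) : (e '' I).OrdConnected := by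
  refine ⟨?_⟩
  rintro _ ⟨p, hp, rfl⟩ _ ⟨q, hq, rfl⟩ z hz
  have hzB : z ∈ B := hB.out (he.image_subset hIB ⟨p, hp, rfl⟩)
    (he.image_subset hIB ⟨q, hq, rfl⟩) hz
  have hw : e.symm z ∈ B := by rwa [← he.apply_mem_iff, Equiv.apply_symm_apply]
  rw [← Equiv.apply_symm_apply e z] at hz
  refine ⟨e.symm z, hI.out hq hp ⟨?_, ?_⟩, Equiv.apply_symm_apply e z⟩
  · exact (he.strictAntiOn.le_iff_ge hw (hIB hq)).mp hz.2
  · exact (he.strictAntiOn.le_iff_ge (hIB hp) hw).mp hz.1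

lemma ordConnected_image (he : ReversesOn e B) (hB : B.OrdConnected) (hI : I.OrdConnected)
    (h : NestedOrDisjoint I B) : (e '' I).OrdConnected := by
  rcases h with h | h | h
  · exact he.ordConnected_image_of_subset hB hI h
  · rwa [he.image_eq (Or.inl h)]
  · rwa [he.image_eq (Or.inr h.symm)]

lemma nestedOrDisjoint_image (he : ReversesOn e B) (hBC : B ⊆ C ∨ Disjoint B C)
    (hIB : NestedOrDisjoint I B) (hIC : NestedOrDisjoint I C) :
    NestedOrDisjoint (e '' I) C := by
  rcases hIB with h | h | h
  · rcases hBC with hBC | hBC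
    · exact Or.inl ((he.image_subset h).trans hBC)
    · exact Or.inr (Or.inr (hBC.mono_left (he.image_subset h)))
  · rwa [he.image_eq (Or.inl h)]
  · rwa [he.image_eq (Or.inr h.symm)]

end ReversesOn

lemma _root_.StrictMono.comp_reversesOn {β : Type*} [LinearOrder β] {f : α → β} (hf : StrictMono f)
    {B : Set β} (hB : B.OrdConnected) {e : Perm β} (he : ReversesOn e B) {ρ : Perm α}
    (hρ : ReversesOn ρ (f ⁻¹' B)) : StrictMono (e ∘ f ∘ ρ) := by
  have hin : ∀ {x}, f x ∈ B → e (f (ρ x)) ∈ B := fun hx =>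
    he.apply_mem_iff.mpr (hρ.apply_mem_iff.mpr hx)
  have hout : ∀ {x}, f x ∉ B → e (f (ρ x)) = f x := fun hx => by
    rw [hρ.apply_of_notMem _ hx, he.apply_of_notMem _ hx]
  intro x y hxy
  simp only [Function.comp_apply]
  by_cases hx : f x ∈ B <;> by_cases hy : f y ∈ B
  · have hρ' : ρ y < ρ x := hρ.strictAntiOn hx hy hxy
    exact he.strictAntiOn (hρ.apply_mem_iff.mpr hy) (hρ.apply_mem_iff.mpr hx) (hf hρ')
  · rw [hout hy]
    exact hB.forall_lt_of_lt hx hy (hf hxy) _ (hin hx)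
  · rw [hout hx]
    exact hB.forall_gt_of_gt hy hx (hf hxy) _ (hin hy)
  · rw [hout hx, hout hy]
    exact hf hxy

section Products

variable {ι : Type*} (blk : ι → Set α) (rev : ι → Perm α)

lemma nestedOrDisjoint_image_prod {L : List ι} (hrev : ∀ K ∈ L, ReversesOn (rev K) (blk K))
    (hL : L.Pairwise fun K K' => blk K' ⊆ blk K ∨ Disjoint (blk K') (blk K)) {I : Set α}
    (hIL : ∀ K ∈ L, NestedOrDisjoint I (blk K)) {C : Set α}
    (hLC : ∀ K ∈ L, blk K ⊆ C ∨ Disjoint (blk K) C) (hIC : NestedOrDisjoint I C) :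
    NestedOrDisjoint ((L.map rev).prod '' I) C := by
  induction L generalizing C with
  | nil => simpa using hIC
  | cons K L ih =>
    rw [List.pairwise_cons] at hL
    have ih' := fun {C} => ih (fun K' hK' => hrev K' (List.mem_cons_of_mem K hK')) hL.2
      (fun K' hK' => hIL K' (List.mem_cons_of_mem K hK')) (C := C)
    rw [List.map_cons, List.prod_cons, Perm.coe_mul, Set.image_comp]
    exact (hrev K List.mem_cons_self).nestedOrDisjoint_image (hLC K List.mem_cons_self)
      (ih' hL.1 (hIL K List.mem_cons_self))
      (ih' (fun K' hK' => hLC K' (List.mem_cons_of_mem K hK')) hIC)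

lemma ordConnected_image_prod {L : List ι} (hrev : ∀ K ∈ L, ReversesOn (rev K) (blk K))
    (hconn : ∀ K ∈ L, (blk K).OrdConnected)
    (hL : L.Pairwise fun K K' => blk K' ⊆ blk K ∨ Disjoint (blk K') (blk K)) {I : Set α}
    (hI : I.OrdConnected) (hIL : ∀ K ∈ L, NestedOrDisjoint I (blk K)) :
    ((L.map rev).prod '' I).OrdConnected := by
  induction L with
  | nil => simpa using hI
  | cons K L ih =>
    have hL' := List.pairwise_cons.mp hL
    have hK := List.mem_cons_self (a := K) (l := L)
    have hL_sub : ∀ K' ∈ L, K' ∈ K :: L := fun _ => List.mem_cons_of_mem K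
    rw [List.map_cons, List.prod_cons, Perm.coe_mul, Set.image_comp]
    refine (hrev K hK).ordConnected_image (hconn K hK)
      (ih (fun K' h => hrev K' (hL_sub K' h)) (fun K' h => hconn K' (hL_sub K' h)) hL'.2
        (fun K' h => hIL K' (hL_sub K' h)))
      (nestedOrDisjoint_image_prod blk rev (fun K' h => hrev K' (hL_sub K' h)) hL'.2
        (fun K' h => hIL K' (hL_sub K' h)) hL'.1 (hIL K hK))

end Products

end Reversal

section Blocks

variable {n : ℕ}

/-- The zero-indexed positions `a - 1, …, b` reversed by `revBlockFun n a b`. -/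
def posBlock (n a b : ℕ) : Set (Fin n) :=
  {p | a - 1 ≤ (p : ℕ) ∧ (p : ℕ) ≤ b}

def revBlock (n a b : ℕ) : Perm (Fin n) :=
  Function.Involutive.toPerm _ (revBlockFun_involutive n a b)

lemma ordConnected_posBlock (a b : ℕ) : (posBlock n a b).OrdConnected :=
  ⟨fun _ hp _ hq _ hr => ⟨hp.1.trans (Fin.le_def.mp hr.1), (Fin.le_def.mp hr.2).trans hq.2⟩⟩

lemma val_revBlock_of_mem {a b : ℕ} (ha : 1 ≤ a) (hb : b < n) {p : Fin n}
    (hp : p ∈ posBlock n a b) : (revBlock n a b p : ℕ) = a + b - 1 - p := by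
  simp only [revBlock, Function.Involutive.coe_toPerm, revBlockFun]
  rw [dif_pos ⟨ha, hp.1, hp.2, hb⟩]

lemma revBlock_reversesOn {a b : ℕ} (ha : 1 ≤ a) (hb : b < n) :
    ReversesOn (revBlock n a b) (posBlock n a b) where
  strictAntiOn p hp q hq hpq := by
    rw [Fin.lt_def, val_revBlock_of_mem ha hb hp, val_revBlock_of_mem ha hb hq]
    have := Fin.lt_def.mp hpq
    have := hq.2
    omega
  apply_of_notMem p hp := by
    simp only [revBlock, Function.Involutive.coe_toPerm, revBlockFun]
    exact dif_neg fun h => hp ⟨h.2.1, h.2.2.1⟩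

lemma exists_eq_posBlock {k : ℕ} {T : Set (Fin k)} (hT : T.OrdConnected) (hk : 0 < k) :
    ∃ a b, 1 ≤ a ∧ a ≤ k + 1 ∧ b < k ∧ T = posBlock k a b := by
  classical
  rcases T.eq_empty_or_nonempty with rfl | hne
  · refine ⟨k + 1, 0, by omega, le_rfl, hk, ?_⟩
    ext p
    simp only [posBlock, Set.mem_empty_iff_false, Set.mem_ofPred_eq, false_iff, not_and]
    omega
  · have hfin : T.toFinset.Nonempty := Set.toFinset_nonempty.mpr hne
    set lo := T.toFinset.min' hfin
    set hi := T.toFinset.max' hfin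
    refine ⟨lo + 1, hi, by omega, by omega, hi.isLt, Set.ext fun p => ⟨fun hp => ?_, fun hp => ?_⟩⟩
    · have hp' : p ∈ T.toFinset := Set.mem_toFinset.mpr hp
      exact ⟨Fin.le_def.mp (T.toFinset.min'_le p hp'), Fin.le_def.mp (T.toFinset.le_max' p hp')⟩
    · exact hT.out (Set.mem_toFinset.mp (T.toFinset.min'_mem hfin))
        (Set.mem_toFinset.mp (T.toFinset.max'_mem hfin)) ⟨Fin.le_def.mpr (by simpa using hp.1),
          Fin.le_def.mpr hp.2⟩

end Blocks

instance (n a b : ℕ) : DecidablePred (· ∈ posBlock n a b) :=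
  fun _ => inferInstanceAs (Decidable (_ ∧ _))

set_option synthInstance.maxSize 2000 in
lemma mul_revBlock_eq_perm3142_or_perm2413 {σ : Perm (Fin 4)} (hσ : σ = perm3142 ∨ σ = perm2413)
    {a b : ℕ} (ha : 1 ≤ a) (ha' : a ≤ 5) (hb : b < 4)
    (h : ((σ * revBlock 4 a b) '' posBlock 4 a b).OrdConnected) :
    σ * revBlock 4 a b = perm3142 ∨ σ * revBlock 4 a b = perm2413 := by
  have hgap : ∀ c ∈ posBlock 4 a b, ∀ d ∈ posBlock 4 a b, ∀ x ∉ posBlock 4 a b,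
      ¬ ((σ * revBlock 4 a b) c < (σ * revBlock 4 a b) x ∧
        (σ * revBlock 4 a b) x < (σ * revBlock 4 a b) d) := by
    rintro c hc d hd x hx ⟨hcx, hxd⟩
    obtain ⟨y, hy, hyx⟩ := h.out ⟨c, hc, rfl⟩ ⟨d, hd, rfl⟩ ⟨hcx.le, hxd.le⟩
    exact hx ((σ * revBlock 4 a b).injective hyx ▸ hy)
  have key : ∀ σ ∈ [perm3142, perm2413], ∀ a < 6, ∀ b < 4, 1 ≤ a →
      (∀ c ∈ posBlock 4 a b, ∀ d ∈ posBlock 4 a b, ∀ x ∉ posBlock 4 a b,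
        ¬ ((σ * revBlock 4 a b) c < (σ * revBlock 4 a b) x ∧
          (σ * revBlock 4 a b) x < (σ * revBlock 4 a b) d)) →
      σ * revBlock 4 a b = perm3142 ∨ σ * revBlock 4 a b = perm2413 := by
    -- 3142 and 2413 are simple (only trivial blocks) and are the reverses of each other
    decide
  exact key σ (by rcases hσ with rfl | rfl <;> simp) a (by omega) b hb ha hgap

section Separable

variable {n : ℕ}

lemma separable_one : Separable (1 : Perm (Fin n)) := by
  constructor <;> rintro ⟨f, hf, hpat⟩
  · exact absurd ((hpat 0 1).mpr (hf (by decide : (0 : Fin 4) < 1))) (by decide)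
  · exact absurd ((hpat 1 2).mpr (hf (by decide : (1 : Fin 4) < 2))) (by decide)

lemma Separable.mul_of_reversesOn {v e : Perm (Fin n)} {B : Set (Fin n)} (hv : Separable v)
    (hB : B.OrdConnected) (hvB : (v '' B).OrdConnected) (he : ReversesOn e B) :
    Separable (v * e) := by
  suffices h : ∀ σ, σ = perm3142 ∨ σ = perm2413 → ContainsPattern (v * e) σ → False from
    ⟨h _ (Or.inl rfl), h _ (Or.inr rfl)⟩
  rintro σ hσ ⟨f, hf, hpat⟩
  obtain ⟨a, b, ha, ha', hb, hT⟩ :=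
    exists_eq_posBlock (hB.preimage_mono hf.monotone) (by norm_num)
  set ρ := revBlock 4 a b
  have hρ : ReversesOn ρ (f ⁻¹' B) := hT ▸ revBlock_reversesOn ha hb
  set g := e ∘ f ∘ ρ
  -- `g` is an occurrence of the pattern `σ * ρ` in `v`
  have hpat' : ∀ c d, (σ * ρ) c < (σ * ρ) d ↔ v (g c) < v (g d) := fun c d => hpat (ρ c) (ρ d)
  have hg_mem : ∀ x, g x ∈ B ↔ x ∈ f ⁻¹' B := fun x =>
    he.apply_mem_iff.trans hρ.apply_mem_iff
  have hconn : ((σ * ρ) '' posBlock 4 a b).OrdConnected := by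
    refine ⟨?_⟩
    rintro _ ⟨c, hc, rfl⟩ _ ⟨d, hd, rfl⟩ z ⟨hcz, hzd⟩
    set x := (σ * ρ).symm z
    have hx : (σ * ρ) x = z := Equiv.apply_symm_apply _ z
    rw [← hx, ← not_lt, hpat'] at hcz hzd
    rw [← hT] at hc hd ⊢
    obtain ⟨y, hy, hyx⟩ := hvB.out ⟨g c, (hg_mem c).mpr hc, rfl⟩ ⟨g d, (hg_mem d).mpr hd, rfl⟩
      ⟨not_lt.mp hcz, not_lt.mp hzd⟩
    exact ⟨x, (hg_mem x).mp (v.injective hyx ▸ hy), hx⟩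
  have hg : StrictMono g := hf.comp_reversesOn hB he hρ
  rcases mul_revBlock_eq_perm3142_or_perm2413 hσ ha ha' hb hconn with h | h
  · exact hv.1 ⟨g, hg, fun c d => h ▸ hpat' c d⟩
  · exact hv.2 ⟨g, hg, fun c d => h ▸ hpat' c d⟩

end Separable

theorem separable_prod_of_pairwise {n : ℕ} {ι : Type*} (blk : ι → Set (Fin n))
    (rev : ι → Perm (Fin n)) {L : List ι} (hrev : ∀ K ∈ L, ReversesOn (rev K) (blk K))
    (hconn : ∀ K ∈ L, (blk K).OrdConnected)
    (hL : L.Pairwise fun K K' => blk K' ⊆ blk K ∨ Disjoint (blk K') (blk K)) :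
    Separable (L.map rev).prod := by
  induction L using List.reverseRecOn with
  | nil => exact separable_one
  | append_singleton L J ih =>
    obtain ⟨hL', -, hLJ⟩ := List.pairwise_append.mp hL
    have hsub : ∀ K ∈ L, K ∈ L ++ [J] := fun K hK => List.mem_append_left _ hK
    have hJ : J ∈ L ++ [J] := List.mem_append_right _ (List.mem_singleton_self J)
    rw [List.map_append, List.prod_append, List.map_singleton, List.prod_singleton]
    have hv := ih (fun K hK => hrev K (hsub K hK)) (fun K hK => hconn K (hsub K hK)) hL'
    refine hv.mul_of_reversesOn (hconn J hJ) ?_ (hrev J hJ)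
    refine ordConnected_image_prod blk rev (fun K hK => hrev K (hsub K hK))
      (fun K hK => hconn K (hsub K hK)) hL' (hconn J hJ) fun K hK => ?_
    rcases hLJ K hK J (List.mem_singleton_self J) with h | h
    · exact Or.inl h
    · exact Or.inr (Or.inr h)

section NestedSet

variable {n : ℕ} {𝒩 : Finset (Finset ℕ)}

def block (n : ℕ) (K : Finset ℕ) : Set (Fin n) :=
  posBlock n (sInf (↑K : Set ℕ)) (sSup (↑K : Set ℕ))

lemma block_Icc {a b : ℕ} (hab : a ≤ b) : block n (Finset.Icc a b) = posBlock n a b := by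
  rw [block, Finset.coe_Icc, csInf_Icc hab, csSup_Icc hab]

lemma w0J_Icc {a b : ℕ} (hab : a ≤ b) : w0J n (Finset.Icc a b) = revBlock n a b := by
  change revBlock n (sInf _) (sSup _) = _
  rw [Finset.coe_Icc, csInf_Icc hab, csSup_Icc hab]

lemma IsNestedSetPath.exists_eq_Icc (hN : IsNestedSetPath n 𝒩) {K : Finset ℕ} (hK : K ∈ 𝒩) :
    ∃ a b, 1 ≤ a ∧ a ≤ b ∧ b < n ∧ K = Finset.Icc a b := by
  obtain ⟨hne, hbd, hint⟩ := hN.1 K hK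
  have hne' : (↑K : Set ℕ).Nonempty := Finset.coe_nonempty.mpr hne
  have hbdd : BddAbove (↑K : Set ℕ) := K.finite_toSet.bddAbove
  have hinf : sInf (↑K : Set ℕ) ∈ K := Nat.sInf_mem hne'
  have hsup : sSup (↑K : Set ℕ) ∈ K := Nat.sSup_mem hne' hbdd
  refine ⟨_, _, (hbd _ hinf).1, Nat.sInf_le hsup, by have := hbd _ hsup; omega, ?_⟩
  ext x
  rw [Finset.mem_Icc]
  exact ⟨fun hx => ⟨Nat.sInf_le hx, le_csSup hbdd hx⟩, fun hx => hint _ hinf _ hsup x hx.1 hx.2⟩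

lemma IsNestedSetPath.reversesOn (hN : IsNestedSetPath n 𝒩) {K : Finset ℕ} (hK : K ∈ 𝒩) :
    ReversesOn (w0J n K) (block n K) := by
  obtain ⟨a, b, ha, hab, hb, rfl⟩ := hN.exists_eq_Icc hK
  rw [w0J_Icc hab, block_Icc hab]
  exact revBlock_reversesOn ha hb

lemma IsNestedSetPath.not_isIntervalSet_union (hN : IsNestedSetPath n 𝒩) {K K' : Finset ℕ}
    (hK : K ∈ 𝒩) (hK' : K' ∈ 𝒩) (hne : K ≠ K') (hdisj : K ∩ K' = ∅) :
    ¬ IsIntervalSet (↑K ∪ ↑K') := by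
  have hpair : (↑({K, K'} : Finset (Finset ℕ)) : Set (Finset ℕ)).Pairwise
      (fun I J => I ∩ J = ∅) := by
    rw [Finset.coe_pair, Set.pairwise_pair]
    exact fun _ => ⟨hdisj, Finset.inter_comm K' K ▸ hdisj⟩
  simpa using hN.2.2 {K, K'} (Finset.insert_subset hK (Finset.singleton_subset_iff.mpr hK'))
    (Finset.card_pair hne).ge hpair

lemma IsNestedSetPath.block_subset_or_disjoint (hN : IsNestedSetPath n 𝒩) {K K' : Finset ℕ}
    (hK : K ∈ 𝒩) (hK' : K' ∈ 𝒩) (hne : K ≠ K') (hns : ¬ K ⊂ K') :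
    block n K' ⊆ block n K ∨ Disjoint (block n K') (block n K) := by
  have hunion := hN.not_isIntervalSet_union hK hK' hne
  obtain ⟨a, b, ha, hab, hb, rfl⟩ := hN.exists_eq_Icc hK
  obtain ⟨a', b', ha', hab', hb', rfl⟩ := hN.exists_eq_Icc hK'
  rw [block_Icc hab, block_Icc hab']
  rcases hN.2.1 _ hK _ hK' with h | h | h
  · exact absurd (h.ssubset_of_ne hne) hns
  · obtain ⟨h1, h2⟩ := (Finset.Icc_subset_Icc_iff hab').mp h
    exact Or.inl fun p hp => ⟨by have := hp.1; omega, hp.2.trans h2⟩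
  · have hsep : b < a' ∨ b' < a := by
      by_contra! hc
      have hmem : max a a' ∈ Finset.Icc a b ∩ Finset.Icc a' b' := by
        simp only [Finset.mem_inter, Finset.mem_Icc]; omega
      simp [h] at hmem
    -- the blocks of two disjoint members overlap only if the members are adjacent
    have hgap : b + 1 < a' ∨ b' + 1 < a := by
      by_contra! hc
      refine hunion h fun i hi j hj m him hmj => ?_
      simp only [Set.mem_union, Finset.coe_Icc, Set.mem_Icc] at hi hj ⊢
      omega
    refine Or.inr (Set.disjoint_left.mpr fun p hp hp' => ?_)
    have := hp.1; have := hp.2; have := hp'.1; have := hp'.2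
    omega

end NestedSet

lemma MonotonicOrdering.pairwise {𝒩 : Finset (Finset ℕ)} {L : List (Finset ℕ)}
    (hL : MonotonicOrdering 𝒩 L) : L.Pairwise fun K K' => K ≠ K' ∧ ¬ K ⊂ K' :=
  hL.1.and <| List.pairwise_iff_get.mpr fun i j hij hsub => by
    have := hL.2.2 i j hsub
    have := Fin.lt_def.mp hij
    omega

theorem stmt_14_general (n : ℕ) (𝒩 : Finset (Finset ℕ)) (hN : IsNestedSetPath n 𝒩)
    (L : List (Finset ℕ)) (hL : MonotonicOrdering 𝒩 L) :
    Separable ((L.map (w0J n)).prod) := by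
  have hmem : ∀ K ∈ L, K ∈ 𝒩 := fun K hK => hL.2.1 ▸ List.mem_toFinset.mpr hK
  refine separable_prod_of_pairwise (block n) (w0J n) (fun K hK => hN.reversesOn (hmem K hK))
    (fun K _ => ordConnected_posBlock _ _) ?_
  exact hL.pairwise.imp_of_mem fun hK hK' h =>
    hN.block_subset_or_disjoint (hmem _ hK) (hmem _ hK') h.1 h.2

/-- for a nested set `𝒩` on the path graph with vertex set `{1,…,n-1}`
and any monotonic ordering `L` of its members, the product `w₀(J₁)⋯w₀(J_r)` is a
separable permutation. -/
theorem stmt_14 (n : ℕ) (hn : 2 ≤ n) (𝒩 : Finset (Finset ℕ)) (hN : IsNestedSetPath n 𝒩)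
    (L : List (Finset ℕ)) (hL : MonotonicOrdering 𝒩 L) :
    Separable ((L.map (w0J n)).prod) :=
  stmt_14_general n 𝒩 hN L hL

end SepPaper
end
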